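/- arXiv:2505.05630 — 4 statements merged into one kernel-verified Lean document; each statement's English description precedes it below -/
import Mathlib

section
/- If a set of gcd conditions (Q, f) is admissible (i.e., there exists a tuple (n_1,...,n_k) of positive integers with gcd{n_i : i in T} = f(T) for all T in Q), then for every prime p and every T in Q, g_p(T) = min{v_i^(p) : i in T}, where v_i^(p) = max({0} ∪ {g_p(T') : T' in Q, i in T'}). -/
/-! Writing `f T = gcd {n_i : i ∈ T}`, the `p`-adic valuation of a gcd is the minimum of the
valuations, so `g_p(T) = min_{i ∈ T} ord_p(n_i)`. Every condition `T' ∋ i` then gives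
`g_p(T') ≤ ord_p(n_i)`, hence `v_i^(p) ≤ ord_p(n_i)`; and `T` itself is one of the conditions
through each of its elements, so `g_p(T) ≤ v_i^(p)` for `i ∈ T`. -/

theorem Finset.factorization_gcd {ι : Type*} {f : ι → ℕ} {s : Finset ι} (hs : s.Nonempty)
    (hf : ∀ i ∈ s, f i ≠ 0) (p : ℕ) :
    (s.gcd f).factorization p = s.inf' hs fun i ↦ (f i).factorization p := by
  induction hs using Finset.Nonempty.cons_induction with
  | singleton a => simp
  | cons a s ha hs ih =>
    have hs0 : s.gcd f ≠ 0 := by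
      obtain ⟨b, hb⟩ := hs
      exact fun h ↦ hf b (mem_cons_of_mem hb) (gcd_eq_zero_iff.1 h b hb)
    rw [gcd_cons, inf'_cons hs, gcd_eq_nat_gcd, Nat.factorization_gcd (hf a (mem_cons_self a s)) hs0,
      Finsupp.inf_apply, ih fun i hi ↦ hf i (mem_cons_of_mem hi)]

theorem Finset.eq_inf'_sup_filter_mem {ι α : Type*} [DecidableEq ι] [Lattice α] [OrderBot α]
    {Q : Finset (Finset ι)} {g : Finset ι → α} {m : ι → α}
    (hg : ∀ T ∈ Q, ∀ i ∈ T, g T ≤ m i) {T : Finset ι} (hT : T ∈ Q) (hTne : T.Nonempty)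
    (hTm : T.inf' hTne m ≤ g T) :
    g T = T.inf' hTne fun i ↦ (Q.filter fun T' ↦ i ∈ T').sup g := by
  refine le_antisymm (le_inf' _ _ fun i hi ↦ le_sup (mem_filter.2 ⟨hT, hi⟩)) (le_trans ?_ hTm)
  exact inf'_mono_fun fun i _ ↦ Finset.sup_le fun T' hT' ↦
    hg T' (mem_filter.1 hT').1 i (mem_filter.1 hT').2

theorem stmt_1_general (k : ℕ)
    (Q : Finset (Finset (Fin k)))
    (f : Finset (Fin k) → ℕ)
    (hadm : ∃ n : Fin k → ℕ, (∀ i, 0 < n i) ∧ ∀ T ∈ Q, T.gcd n = f T)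
    (p : ℕ)
    (T : Finset (Fin k)) (hT : T ∈ Q) (hTne : T.Nonempty) :
    (f T).factorization p =
      T.inf' hTne (fun i =>
        (Q.filter (fun T' => i ∈ T')).sup (fun T' => (f T').factorization p)) := by
  obtain ⟨n, hn, hgcd⟩ := hadm
  have hval : ∀ T' ∈ Q, ∀ hne : T'.Nonempty,
      (f T').factorization p = T'.inf' hne fun i ↦ (n i).factorization p := fun T' hT' hne ↦ by
    rw [← hgcd T' hT']
    exact Finset.factorization_gcd hne (fun i _ ↦ (hn i).ne') p
  refine Finset.eq_inf'_sup_filter_mem (g := fun T' ↦ (f T').factorization p)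
    (m := fun i ↦ (n i).factorization p) ?_ hT hTne (hval T hT hTne).ge
  intro T' hT' i hi
  rw [hval T' hT' ⟨i, hi⟩]
  exact Finset.inf'_le _ hi

/-- If the set of gcd conditions `(Q, f)` is admissible, then for every
prime `p` and every `T ∈ Q`, `g_p(T) = min {v_i^(p) : i ∈ T}`, where
`v_i^(p) = max ({0} ∪ {g_p(T') : T' ∈ Q, i ∈ T'})`. -/
theorem stmt_1 (k : ℕ) (hk : 2 ≤ k)
    (Q : Finset (Finset (Fin k))) (hQ : ∀ T ∈ Q, 2 ≤ T.card)
    (f : Finset (Fin k) → ℕ) (hf : ∀ T ∈ Q, 0 < f T)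
    (hadm : ∃ n : Fin k → ℕ, (∀ i, 0 < n i) ∧ ∀ T ∈ Q, T.gcd n = f T)
    (p : ℕ) (hp : p.Prime)
    (T : Finset (Fin k)) (hT : T ∈ Q) (hTne : T.Nonempty) :
    (f T).factorization p =
      T.inf' hTne (fun i =>
        (Q.filter (fun T' => i ∈ T')).sup (fun T' => (f T').factorization p)) :=
  stmt_1_general k Q f hadm p T hT hTne
end

section
/- Let p be a prime and suppose f ≡ 1 on Q, with W a cover of Q. Then for complex s_1,...,s_k with positive real parts, ∑_{a_1,...,a_k ≥ 0} δ(a)/p^{a_1 s_1 + ... + a_k s_k} = ∏_{i∈S}(1-p^{-s_i})^{-1} · ∑'_{V ⊆ W} ∏_{v∈V} p^{-s_v} ∏_{i ∈ (W\V) ∪ M(V)} (1-p^{-s_i}), where δ(a) = 1 iff min{a_i : i in T} = 0 for all T in Q, the primed sum runs over independent subsets V of W (those containing no T in Q), and M(V) = N(V) \ W. -/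
/-!
Put `x i = p ^ (-s i)`, so that `‖x i‖ < 1` and the summand is `δ(a) ∏ i, x i ^ a i`.
If `δ(a) = 1` then `V = {i ∈ W | a i ≠ 0}` is independent. For independent `V ⊆ W`, the `a`
with `δ(a) = 1` giving this `V` are exactly those positive on `V` and vanishing on
`(W \ V) ∪ M(V)`; the cover condition makes the latter imply `δ(a) = 1`, since a `T ∈ Q`
disjoint from `W \ V` has `∅ ≠ T \ V ⊆ T \ W`, a single point, which then lies in `M(V)`.
So the sum splits over independent `V` into boxes of constrained coordinates, and each box
is a product of geometric series.
-/

open scoped Classical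
open Finset

theorem Fin.prod_consEquiv {M κ : Type*} [CommMonoid M] {n : ℕ} (f : Fin (n + 1) → κ → M)
    (q : κ × (Fin n → κ)) :
    ∏ i, f i (Fin.consEquiv (fun _ => κ) q i) = f 0 q.1 * ∏ i, f i.succ (q.2 i) := by
  rw [Fin.prod_univ_succ]
  simp [Fin.consEquiv]

section PiProd

variable {R κ : Type*} [NormedCommRing R] [CompleteSpace R]

theorem summable_norm_fin_pi_prod_and_tsum_eq {n : ℕ} (f : Fin n → κ → R)
    (hf : ∀ i, Summable fun m => ‖f i m‖) :
    (Summable fun a : Fin n → κ => ‖∏ i, f i (a i)‖) ∧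
      ∑' a : Fin n → κ, ∏ i, f i (a i) = ∏ i, ∑' m, f i m := by
  induction n with
  | zero => exact ⟨.of_finite, by simp⟩
  | succ n ih =>
    obtain ⟨htail, htail_eq⟩ := ih (fun i => f i.succ) (fun i => hf i.succ)
    constructor
    · refine (Fin.consEquiv fun _ => κ).summable_iff.mp ?_
      convert (hf 0).mul_norm htail using 2 with q
      exact congrArg norm (Fin.prod_consEquiv f q)
    · rw [← (Fin.consEquiv fun _ => κ).tsum_eq, tsum_congr (Fin.prod_consEquiv f),
        ← tsum_mul_tsum_of_summable_norm (hf 0) htail, htail_eq, Fin.prod_univ_succ]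

theorem hasSum_pi_prod {ι : Type*} [Fintype ι] (f : ι → κ → R)
    (hf : ∀ i, Summable fun m => ‖f i m‖) :
    HasSum (fun a : ι → κ => ∏ i, f i (a i)) (∏ i, ∑' m, f i m) := by
  let e := Fintype.equivFin ι
  obtain ⟨hsum, htsum⟩ :=
    summable_norm_fin_pi_prod_and_tsum_eq (fun j => f (e.symm j)) (fun j => hf _)
  have hcomp : (fun b : Fin _ → κ => ∏ j, f (e.symm j) (b j)) ∘ e.arrowCongr (.refl κ) =
      fun a => ∏ i, f i (a i) := by
    funext a
    exact e.symm.prod_comp fun i => f i (a i)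
  rw [← hcomp, (e.arrowCongr _).hasSum_iff, ← e.symm.prod_comp fun i => ∑' m, f i m, ← htsum]
  exact hsum.of_norm.hasSum

end PiProd

theorem hasSum_ite_ne_zero_geometric_of_norm_lt_one {𝕜 : Type*} [NormedField 𝕜] {x : 𝕜}
    (hx : ‖x‖ < 1) : HasSum (fun n : ℕ => if n ≠ 0 then x ^ n else 0) (x * (1 - x)⁻¹) := by
  have hx1 : 1 - x ≠ 0 := sub_ne_zero.mpr fun h => by simp [← h] at hx
  rw [show x * (1 - x)⁻¹ = (1 - x)⁻¹ - 1 by field_simp; ring]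
  refine ((hasSum_geometric_of_norm_lt_one hx).sub (hasSum_ite_eq 0 1)).congr_fun fun n => ?_
  rcases eq_or_ne n 0 with rfl | hn <;> simp [*]

section Constrained

variable {𝕜 : Type*} [NormedField 𝕜]

theorem hasSum_geometric_constrained {x : 𝕜} (hx : ‖x‖ < 1) {pos zero : Prop} [Decidable pos]
    [Decidable zero] (h : ¬(pos ∧ zero)) :
    HasSum (fun n : ℕ => if (pos → n ≠ 0) ∧ (zero → n = 0) then x ^ n else 0)
      ((1 - x)⁻¹ * ((if pos then x else 1) * (if zero then 1 - x else 1))) := by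
  have hx1 : 1 - x ≠ 0 := sub_ne_zero.mpr fun h => by simp [← h] at hx
  by_cases hpos : pos
  · have hzero : ¬zero := fun hz => h ⟨hpos, hz⟩
    simpa [hpos, hzero, mul_comm] using hasSum_ite_ne_zero_geometric_of_norm_lt_one hx
  by_cases hzero : zero
  · rw [if_neg hpos, if_pos hzero, one_mul, inv_mul_cancel₀ hx1]
    refine (hasSum_ite_eq 0 (1 : 𝕜)).congr_fun fun n => ?_
    rcases eq_or_ne n 0 with rfl | hn <;> simp [*]
  · simpa [hpos, hzero] using hasSum_geometric_of_norm_lt_one hx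

theorem hasSum_prod_pow_constrained [CompleteSpace 𝕜] {ι : Type*} [Fintype ι] [DecidableEq ι]
    {x : ι → 𝕜} (hx : ∀ i, ‖x i‖ < 1) {P Z : Finset ι} (hPZ : Disjoint P Z) :
    HasSum (fun a : ι → ℕ =>
        if ∀ i, (i ∈ P → a i ≠ 0) ∧ (i ∈ Z → a i = 0) then ∏ i, x i ^ a i else 0)
      ((∏ i, (1 - x i)⁻¹) * ((∏ i ∈ P, x i) * ∏ i ∈ Z, (1 - x i))) := by
  let g (i : ι) (n : ℕ) : 𝕜 := if (i ∈ P → n ≠ 0) ∧ (i ∈ Z → n = 0) then x i ^ n else 0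
  have hg (i : ι) := hasSum_geometric_constrained (pos := i ∈ P) (zero := i ∈ Z) (hx i)
    fun h => disjoint_left.mp hPZ h.1 h.2
  have hg_norm (i : ι) : Summable fun n => ‖g i n‖ := by
    refine .of_nonneg_of_le (fun _ => norm_nonneg _) (fun n => ?_)
      (summable_geometric_of_lt_one (norm_nonneg _) (hx i))
    simp only [g]
    split_ifs <;> simp [norm_pow]
  convert hasSum_pi_prod g hg_norm using 1
  · funext a
    exact (Fintype.prod_ite_zero).symm
  · simp only [g, (hg _).tsum_eq, prod_mul_distrib, prod_ite_mem, univ_inter]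

end Constrained

section Cover

variable {ι : Type*} (Q : Finset (Finset ι))

/-- `δ(a) = 1` in the paper's notation. -/
def ZeroSetMeets (a : ι → ℕ) : Prop := ∀ T ∈ Q, ∃ i ∈ T, a i = 0

variable {Q} in
theorem forall_inf'_eq_zero_iff (hQ : ∀ T ∈ Q, T.Nonempty) (a : ι → ℕ) :
    (∀ T ∈ Q, ∀ hT : T.Nonempty, T.inf' hT a = 0) ↔ ZeroSetMeets Q a := by
  have hinf {T : Finset ι} (hT : T.Nonempty) : T.inf' hT a = 0 ↔ ∃ i ∈ T, a i = 0 := by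
    simp only [← Nat.le_zero, inf'_le_iff]
  exact ⟨fun h T hT => (hinf _).mp (h T hT (hQ T hT)), fun h T hT _ => (hinf _).mpr (h T hT)⟩

variable [Fintype ι] [DecidableEq ι] (W : Finset ι)

def independentSubsets : Finset (Finset ι) := W.powerset.filter fun V => ∀ T ∈ Q, ¬T ⊆ V

def neighbours (V : Finset ι) : Finset ι := univ.filter fun x => ∃ T ∈ Q, T \ V = {x}

def forcedZeros (V : Finset ι) : Finset ι := (W \ V) ∪ (neighbours Q V \ W)

variable {Q W}

theorem mem_independentSubsets {V : Finset ι} :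
    V ∈ independentSubsets Q W ↔ V ⊆ W ∧ ∀ T ∈ Q, ¬T ⊆ V := by
  simp [independentSubsets]

theorem disjoint_forcedZeros {V : Finset ι} (hV : V ⊆ W) : Disjoint V (forcedZeros Q W V) := by
  rw [forcedZeros, disjoint_union_right]
  exact ⟨disjoint_sdiff, disjoint_of_subset_left hV disjoint_sdiff⟩

theorem filter_ne_zero_mem_independentSubsets {a : ι → ℕ} (ha : ZeroSetMeets Q a) :
    W.filter (a · ≠ 0) ∈ independentSubsets Q W := by
  refine mem_independentSubsets.mpr ⟨filter_subset _ _, fun T hT hTV => ?_⟩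
  obtain ⟨i, hiT, hai⟩ := ha T hT
  exact (mem_filter.mp (hTV hiT)).2 hai

theorem zeroSetMeets_of_forcedZeros (hW : ∀ T ∈ Q, (T \ W).card ≤ 1) {V : Finset ι}
    (hV : ∀ T ∈ Q, ¬T ⊆ V) {a : ι → ℕ} (ha : ∀ i ∈ forcedZeros Q W V, a i = 0) :
    ZeroSetMeets Q a := by
  intro T hT
  by_cases hTW : ∃ i ∈ T, i ∈ W \ V
  · obtain ⟨i, hiT, hi⟩ := hTW
    exact ⟨i, hiT, ha i (mem_union_left _ hi)⟩
  obtain ⟨j, hjT, hjV⟩ := not_subset.mp (hV T hT)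
  push Not at hTW
  have hTV_sub : T \ V ⊆ T \ W := fun z hz => by
    obtain ⟨hzT, hzV⟩ := mem_sdiff.mp hz
    exact mem_sdiff.mpr ⟨hzT, fun hzW => hTW z hzT (mem_sdiff.mpr ⟨hzW, hzV⟩)⟩
  have hj : j ∈ T \ V := mem_sdiff.mpr ⟨hjT, hjV⟩
  have hTV : T \ V = {j} := eq_singleton_iff_unique_mem.mpr
    ⟨hj, fun z hz => card_le_one.mp (hW T hT) z (hTV_sub hz) j (hTV_sub hj)⟩
  have hjN : j ∈ neighbours Q V := by simpa [neighbours] using ⟨T, hT, hTV⟩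
  have hjW : j ∉ W := (mem_sdiff.mp (hTV_sub hj)).2
  exact ⟨j, hjT, ha j (mem_union_right _ (mem_sdiff.mpr ⟨hjN, hjW⟩))⟩

theorem constrained_iff_zeroSetMeets_and_filter_eq (hW : ∀ T ∈ Q, (T \ W).card ≤ 1) {V : Finset ι}
    (hV : V ∈ independentSubsets Q W) {a : ι → ℕ} :
    (∀ i, (i ∈ V → a i ≠ 0) ∧ (i ∈ forcedZeros Q W V → a i = 0)) ↔
      ZeroSetMeets Q a ∧ W.filter (a · ≠ 0) = V := by
  obtain ⟨hVW, hVind⟩ := mem_independentSubsets.mp hV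
  constructor
  · intro ha
    refine ⟨zeroSetMeets_of_forcedZeros hW hVind fun i hi => (ha i).2 hi, ?_⟩
    ext i
    simp only [mem_filter]
    refine ⟨fun ⟨hiW, hai⟩ => ?_, fun hiV => ⟨hVW hiV, (ha i).1 hiV⟩⟩
    by_contra hiV
    exact hai ((ha i).2 (mem_union_left _ (mem_sdiff.mpr ⟨hiW, hiV⟩)))
  · rintro ⟨ha, rfl⟩ i
    refine ⟨fun hi => (mem_filter.mp hi).2, fun hi => ?_⟩
    rcases mem_union.mp hi with hi | hi
    · by_contra hai
      exact (mem_sdiff.mp hi).2 (mem_filter.mpr ⟨(mem_sdiff.mp hi).1, hai⟩)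
    · obtain ⟨T, hT, hTV⟩ := (mem_filter.mp (mem_sdiff.mp hi).1).2
      obtain ⟨j, hjT, haj⟩ := ha T hT
      have hj : j ∈ T \ W.filter (a · ≠ 0) :=
        mem_sdiff.mpr ⟨hjT, fun h => (mem_filter.mp h).2 haj⟩
      rw [hTV, mem_singleton] at hj
      exact hj ▸ haj

theorem ite_zeroSetMeets_eq_sum {M : Type*} [AddCommMonoid M] (hW : ∀ T ∈ Q, (T \ W).card ≤ 1)
    (a : ι → ℕ) (c : M) :
    (if ZeroSetMeets Q a then c else 0) = ∑ V ∈ independentSubsets Q W,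
      if ∀ i, (i ∈ V → a i ≠ 0) ∧ (i ∈ forcedZeros Q W V → a i = 0) then c else 0 := by
  rw [sum_congr rfl fun V hV => if_congr (constrained_iff_zeroSetMeets_and_filter_eq hW hV) rfl rfl]
  by_cases ha : ZeroSetMeets Q a
  · simp [ha, filter_ne_zero_mem_independentSubsets ha]
  · simp [ha]

theorem hasSum_ite_zeroSetMeets {𝕜 : Type*} [NormedField 𝕜] [CompleteSpace 𝕜] {x : ι → 𝕜}
    (hx : ∀ i, ‖x i‖ < 1) (hW : ∀ T ∈ Q, (T \ W).card ≤ 1) :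
    HasSum (fun a : ι → ℕ => if ZeroSetMeets Q a then ∏ i, x i ^ a i else 0)
      ((∏ i, (1 - x i)⁻¹) * ∑ V ∈ independentSubsets Q W,
        (∏ v ∈ V, x v) * ∏ i ∈ forcedZeros Q W V, (1 - x i)) := by
  rw [mul_sum]
  convert hasSum_sum fun V hV => hasSum_prod_pow_constrained hx
    (disjoint_forcedZeros (mem_independentSubsets.mp hV).1) using 1
  funext a
  exact ite_zeroSetMeets_eq_sum hW a _

end Cover

theorem Complex.cpow_neg_sum_mul {ι : Type*} {x : ℂ} (hx : x ≠ 0) (t : Finset ι) (a : ι → ℕ)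
    (s : ι → ℂ) : x ^ (-∑ i ∈ t, (a i : ℂ) * s i) = ∏ i ∈ t, (x ^ (-s i)) ^ a i := by
  simp only [cpow_def_of_ne_zero hx, ← exp_nat_mul, ← exp_sum]
  congr 1
  rw [mul_neg, mul_sum, ← sum_neg_distrib]
  exact sum_congr rfl fun i _ => by ring

theorem stmt_9_general (k : ℕ)
    (Q : Finset (Finset (Fin k))) (hQ : ∀ T ∈ Q, 2 ≤ T.card)
    (W : Finset (Fin k)) (hW : ∀ T ∈ Q, (T \ W).card ≤ 1)
    (p : ℕ) (hp : p.Prime)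
    (s : Fin k → ℂ) (hs : ∀ i, 0 < (s i).re) :
    (∑' a : Fin k → ℕ,
        (if ∀ T ∈ Q, ∀ hTne : T.Nonempty, T.inf' hTne a = 0 then (1 : ℂ) else 0) *
          (p : ℂ) ^ (-(∑ i, (a i : ℂ) * s i))) =
      (∏ i : Fin k, (1 - (p : ℂ) ^ (-(s i)))⁻¹) *
        ∑ V ∈ W.powerset.filter (fun V => ∀ T ∈ Q, ¬ T ⊆ V),
          (∏ v ∈ V, (p : ℂ) ^ (-(s v))) *
            ∏ i ∈ (W \ V) ∪
                ((Finset.univ.filter (fun x => ∃ T ∈ Q, T \ V = {x})) \ W),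
              (1 - (p : ℂ) ^ (-(s i))) := by
  have hx (i : Fin k) : ‖(p : ℂ) ^ (-s i)‖ < 1 := by
    rw [Complex.norm_natCast_cpow_of_pos hp.pos]
    exact Real.rpow_lt_one_of_one_lt_of_neg (by exact_mod_cast hp.one_lt) (by simpa using hs i)
  have hQ_nonempty (T : Finset (Fin k)) (hT : T ∈ Q) : T.Nonempty :=
    card_pos.mp (by linarith [hQ T hT])
  refine (tsum_congr fun a => ?_).trans (hasSum_ite_zeroSetMeets hx hW).tsum_eq
  rw [Complex.cpow_neg_sum_mul (by exact_mod_cast hp.ne_zero), ite_zero_mul, one_mul]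
  exact if_congr (forall_inf'_eq_zero_iff hQ_nonempty a) rfl rfl

/-- with `f ≡ 1` and `W` a cover of `Q`, for every prime `p` and complex
`s_1, …, s_k` with positive real parts,
`∑_{a} δ(a) p^{-(a_1 s_1 + ⋯ + a_k s_k)}
  = ∏_{i ∈ S} (1 - p^{-s_i})⁻¹ ⬝ ∑'_{V ⊆ W} ∏_{v ∈ V} p^{-s_v}
      ∏_{i ∈ (W∖V) ∪ M(V)} (1 - p^{-s_i})`,
where `δ(a) = 1` iff `min {a i : i ∈ T} = 0` for all `T ∈ Q`, the primed sum runs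
over independent `V ⊆ W`, and `M(V) = N(V) ∖ W`. -/
theorem stmt_9 (k : ℕ) (hk : 2 ≤ k)
    (Q : Finset (Finset (Fin k))) (hQ : ∀ T ∈ Q, 2 ≤ T.card)
    (W : Finset (Fin k)) (hW : ∀ T ∈ Q, (T \ W).card ≤ 1)
    (p : ℕ) (hp : p.Prime)
    (s : Fin k → ℂ) (hs : ∀ i, 0 < (s i).re) :
    (∑' a : Fin k → ℕ,
        (if ∀ T ∈ Q, ∀ hTne : T.Nonempty, T.inf' hTne a = 0 then (1 : ℂ) else 0) *
          (p : ℂ) ^ (-(∑ i, (a i : ℂ) * s i))) =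
      (∏ i : Fin k, (1 - (p : ℂ) ^ (-(s i)))⁻¹) *
        ∑ V ∈ W.powerset.filter (fun V => ∀ T ∈ Q, ¬ T ⊆ V),
          (∏ v ∈ V, (p : ℂ) ^ (-(s v))) *
            ∏ i ∈ (W \ V) ∪
                ((Finset.univ.filter (fun x => ∃ T ∈ Q, T \ V = {x})) \ W),
              (1 - (p : ℂ) ^ (-(s i))) :=
  stmt_9_general k Q hQ W hW p hp s hs
end

section
/- If G = (Q,f) is admissible and δ_{G_p}(p^{a_1},...,p^{a_k}) = 1, then a_i = v_i^(p) for every i in Z_p. -/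
/-!
Each `T ∈ Q` containing `j` forces `a j ≥ min_T a = g_p(T)`, so `a ≥ v` pointwise. For the set `T`
witnessing `i ∈ Z_p`, every `j ∈ T \ {i}` has `a j ≥ v j > g_p(T)`, so the minimum `g_p(T)` of `a` on `T`
is attained at `i`, giving `v i ≤ a i = g_p(T) ≤ v i`.
-/

open Finset

section

variable {ι α : Type*} [LinearOrder α]

theorem Finset.apply_eq_of_inf'_eq_of_lt {T : Finset ι} (hT : T.Nonempty) {a : ι → α} {c : α}
    (hinf : T.inf' hT a = c) {i : ι} (hi : i ∈ T) (hlt : ∀ j ∈ T, j ≠ i → c < a j) : a i = c := by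
  obtain ⟨j, hjT, hj⟩ := exists_mem_eq_inf' hT a
  obtain rfl | hji := eq_or_ne j i
  · exact hj.symm.trans hinf
  · exact ((hlt j hjT hji).ne (hinf ▸ hj)).elim

theorem Finset.sup_filter_mem_le_of_inf'_eq [OrderBot α] [DecidableEq ι] {Q : Finset (Finset ι)}
    {g : Finset ι → α} {a : ι → α} (hsat : ∀ T ∈ Q, ∀ hT : T.Nonempty, T.inf' hT a = g T) (j : ι) :
    (Q.filter (fun T => j ∈ T)).sup g ≤ a j :=
  Finset.sup_le fun T hT => by
    obtain ⟨hTQ, hjT⟩ := mem_filter.1 hT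
    exact hsat T hTQ ⟨j, hjT⟩ ▸ inf'_le a hjT

end

open scoped Classical

theorem stmt_15_general (k : ℕ)
    (Q : Finset (Finset (Fin k)))
    (f : Finset (Fin k) → ℕ)
    (p : ℕ)
    (v : Fin k → ℕ)
    (hv : ∀ i : Fin k,
      v i = (Q.filter (fun T' => i ∈ T')).sup (fun T' => (f T').factorization p))
    (a : Fin k → ℕ)
    (hsat : ∀ T ∈ Q, ∀ hTne : T.Nonempty, T.inf' hTne a = (f T).factorization p)
    (i : Fin k)
    (hi : ∃ T ∈ Q, i ∈ T ∧ ∀ j ∈ T, j ≠ i → (f T).factorization p < v j) :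
    a i = v i := by
  obtain ⟨T, hTQ, hiT, hlt⟩ := hi
  have hva : ∀ j, v j ≤ a j := fun j => hv j ▸ sup_filter_mem_le_of_inf'_eq hsat j
  have hai : a i = (f T).factorization p :=
    apply_eq_of_inf'_eq_of_lt ⟨i, hiT⟩ (hsat T hTQ _) hiT
      fun j hjT hji => (hlt j hjT hji).trans_le (hva j)
  have hvi : (f T).factorization p ≤ v i :=
    hv i ▸ le_sup (f := fun T' => (f T').factorization p) (mem_filter.2 ⟨hTQ, hiT⟩)
  exact le_antisymm (hai ▸ hvi) (hva i)

/-- if `G = (Q, f)` is admissible and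
`δ_{G_p}(p^{a_1}, …, p^{a_k}) = 1` (i.e. `min {a_i : i ∈ T} = g_p(T)` for all
`T ∈ Q`), then `a_i = v_i^(p)` for every `i ∈ Z_p`. -/
theorem stmt_15 (k : ℕ) (hk : 2 ≤ k)
    (Q : Finset (Finset (Fin k))) (hQ : ∀ T ∈ Q, 2 ≤ T.card)
    (f : Finset (Fin k) → ℕ) (hf : ∀ T ∈ Q, 0 < f T)
    (hadm : ∃ n : Fin k → ℕ, (∀ i, 0 < n i) ∧ ∀ T ∈ Q, T.gcd n = f T)
    (p : ℕ) (hp : p.Prime)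
    (v : Fin k → ℕ)
    (hv : ∀ i : Fin k,
      v i = (Q.filter (fun T' => i ∈ T')).sup (fun T' => (f T').factorization p))
    (a : Fin k → ℕ)
    (hsat : ∀ T ∈ Q, ∀ hTne : T.Nonempty, T.inf' hTne a = (f T).factorization p)
    (i : Fin k)
    (hi : ∃ T ∈ Q, i ∈ T ∧ ∀ j ∈ T, j ≠ i → (f T).factorization p < v j) :
    a i = v i :=
  stmt_15_general k Q f p v hv a hsat i hi
end

section
/- The error bound: for k ≥ 2 and f ≡ 1 on Q, with h = μ * δ_G, for any tuple (u_1,...,u_k) ∈ {0,1}^k with ∑ u_i < k, one has x^{∑ u_i} ∑_{d_1,...,d_k ≤ x} |h(d_1,...,d_k)| / (d_1^{u_1}···d_k^{u_k}) ≪ x^{k-1} (log x)^{k-1}. -/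
/-!
Expanding each condition `gcd_{i ∈ T} d_i = 1` by Möbius inversion gives
`h(n) = ∑_t ∏_T μ(t_T) [n_i = lcm_{T ∋ i} t_T for all i]`, where `t` runs over squarefree
families indexed by `Q`; so `|h(n)|` is at most the number of such representations of `n`.
Fix `j` with `u_j = 0`. For `n_i ≤ N` one has `1 / n^u ≤ N^{k-1-∑u} / ∏_{i ≠ j} n_i`, which reduces
the claim to `∑_t ∏_{i ≠ j} 1 / lcm_{T ∋ i} t_T ≪ (log N)^{k-1}`.
Grouping the primes of `t` by the set `S ⊆ Q` of members they divide turns this sum into at most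
`∏_S ∑_{m ≤ N} m^{-e(S)}`, where `e(S)` counts the coordinates `i ≠ j` covered by `S`. As every
`T ∈ Q` has two elements, `e(S) ≥ 1` for `S ≠ ∅`, and `e(S) = 1` forces `S = {{i, j}}`; so at most
`k - 1` factors are logarithmic and the others are bounded by `∑ 1/m² ≤ 2`.
-/

open Filter Asymptotics
open scoped Classical

/-- The coordinatewise Möbius convolution `h = μ * δ_G` for `f ≡ 1`. -/
noncomputable def hFun (k : ℕ) (Q : Finset (Finset (Fin k))) (n : Fin k → ℕ) : ℤ :=
  ∑ d ∈ Fintype.piFinset (fun i => (n i).divisors),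
    (∏ i, ArithmeticFunction.moebius (n i / d i)) *
      (if ∀ T ∈ Q, T.gcd d = 1 then 1 else 0)

open Finset ArithmeticFunction
open scoped ArithmeticFunction.Moebius

lemma sum_divisors_moebius (m : ℕ) : ∑ a ∈ m.divisors, μ a = if m = 1 then 1 else 0 := by
  rw [← coe_mul_zeta_apply, moebius_mul_coe_zeta, one_apply]

lemma sum_divisors_ite_dvd_moebius_div {n : ℕ} (hn : n ≠ 0) (L : ℕ) :
    ∑ e ∈ n.divisors, (if L ∣ e then μ (n / e) else 0) = if n = L then 1 else 0 := by
  by_cases hL : L ∣ n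
  · obtain ⟨m, rfl⟩ := hL
    have hL0 : L ≠ 0 := left_ne_zero_of_mul hn
    rw [← Nat.sum_div_divisors]
    calc ∑ c ∈ (L * m).divisors, (if L ∣ L * m / c then μ (L * m / (L * m / c)) else 0)
        = ∑ c ∈ (L * m).divisors, if c ∣ m then μ c else 0 := by
          refine sum_congr rfl fun c hc => ?_
          have hc := Nat.dvd_of_mem_divisors hc
          simp only [Nat.dvd_div_iff_mul_dvd hc, mul_comm c, mul_dvd_mul_iff_left hL0,
            Nat.div_div_self hc hn]
      _ = if L * m = L then 1 else 0 := by
          rw [← sum_filter, Nat.divisors_filter_dvd_of_dvd hn (dvd_mul_left m L),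
            sum_divisors_moebius]
          simp [hL0]
  · rw [if_neg (by rintro rfl; exact hL dvd_rfl)]
    exact sum_eq_zero fun e he =>
      if_neg fun hLe => hL (hLe.trans (Nat.dvd_of_mem_divisors he))

lemma sum_piFinset_divisors_prod_ite_dvd_moebius_div {ι : Type*} [Fintype ι] [DecidableEq ι]
    {n : ι → ℕ} (hn : ∀ i, n i ≠ 0) (L : ι → ℕ) :
    ∑ d ∈ Fintype.piFinset (fun i => (n i).divisors),
        ∏ i, (if L i ∣ d i then μ (n i / d i) else 0) = if n = L then 1 else 0 := by
  rw [← prod_univ_sum (fun i => (n i).divisors) fun i e => if L i ∣ e then μ (n i / e) else 0]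
  simp only [funext_iff, ← Fintype.prod_boole]
  exact prod_congr rfl fun i _ => sum_divisors_ite_dvd_moebius_div (hn i) (L i)

lemma ite_gcd_eq_one_eq_sum_moebius {ι : Type*} {T : Finset ι} (hT : T.Nonempty) {d : ι → ℕ}
    {M : ℕ} (hd : ∀ i ∈ T, d i ∈ Icc 1 M) :
    (if T.gcd d = 1 then 1 else 0) = ∑ a ∈ Icc 1 M, if ∀ i ∈ T, a ∣ d i then μ a else 0 := by
  obtain ⟨i₀, hi₀⟩ := hT
  have hd₀ := mem_Icc.1 (hd i₀ hi₀)
  have hgcd : T.gcd d ≠ 0 := fun h => by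
    have := gcd_eq_zero_iff.1 h i₀ hi₀
    omega
  rw [← sum_divisors_moebius, ← sum_filter]
  refine sum_congr (ext fun a => ?_) fun _ _ => rfl
  simp only [Nat.mem_divisors, mem_filter, mem_Icc, Finset.dvd_gcd_iff, hgcd, ne_eq,
    not_false_eq_true, and_true]
  refine ⟨fun h => ⟨⟨Nat.pos_of_dvd_of_pos (h i₀ hi₀) (by omega), ?_⟩, h⟩, fun h => h.2⟩
  exact (Nat.le_of_dvd (by omega) (h i₀ hi₀)).trans hd₀.2

lemma sum_Icc_inv_le_one_add_log (N : ℕ) : ∑ x ∈ Icc 1 N, (x : ℝ)⁻¹ ≤ 1 + Real.log N := by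
  have h := harmonic_le_one_add_log N
  rw [harmonic_eq_sum_Icc] at h
  push_cast at h
  exact h

lemma sum_Icc_inv_pow_le_two (N : ℕ) {e : ℕ} (he : 2 ≤ e) :
    ∑ x ∈ Icc 1 N, ((x : ℝ) ^ e)⁻¹ ≤ 2 := by
  calc ∑ x ∈ Icc 1 N, ((x : ℝ) ^ e)⁻¹
      ≤ ∑ x ∈ Ioo 0 (N + 1), ((x : ℝ) ^ 2)⁻¹ := by
        rw [show Ioo 0 (N + 1) = Icc 1 N by ext; simp only [mem_Ioo, mem_Icc]; omega]
        refine sum_le_sum fun x hx => ?_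
        have hx : (1 : ℝ) ≤ x := by exact_mod_cast (mem_Icc.1 hx).1
        exact inv_anti₀ (pow_pos (by linarith) 2) (pow_le_pow_right₀ hx he)
    _ ≤ 2 := by simpa using sum_Ioo_inv_sq_le (α := ℝ) 0 (N + 1)

lemma prod_le_pow_mul_prod_pow {ι : Type*} (s : Finset ι) {g : ι → ℝ} {N : ℝ}
    (hg : ∀ i ∈ s, 0 ≤ g i) (hgN : ∀ i ∈ s, g i ≤ N) {u : ι → ℕ} (hu : ∀ i ∈ s, u i ≤ 1) :
    ∏ i ∈ s, g i ≤ N ^ (#s - ∑ i ∈ s, u i) * ∏ i ∈ s, g i ^ u i := by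
  calc ∏ i ∈ s, g i = ∏ i ∈ s, g i ^ u i * g i ^ (1 - u i) :=
        prod_congr rfl fun i hi => by rw [← pow_add, Nat.add_sub_cancel' (hu i hi), pow_one]
    _ ≤ ∏ i ∈ s, g i ^ u i * N ^ (1 - u i) :=
        prod_le_prod (fun i hi => by have := hg i hi; positivity) fun i hi =>
          mul_le_mul_of_nonneg_left (pow_le_pow_left₀ (hg i hi) (hgN i hi) _)
            (pow_nonneg (hg i hi) _)
    _ = N ^ (#s - ∑ i ∈ s, u i) * ∏ i ∈ s, g i ^ u i := by
        rw [prod_mul_distrib, prod_pow_eq_pow_sum, sum_tsub_distrib _ hu, sum_const,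
          smul_eq_mul, mul_one, mul_comm]

lemma inv_prod_pow_le {ι : Type*} [Fintype ι] [DecidableEq ι] {u : ι → ℕ} (hu : ∀ i, u i ≤ 1)
    {j : ι} (hj : u j = 0) {N : ℕ} {n : ι → ℕ} (hn : ∀ i, n i ∈ Icc 1 N) :
    (∏ i, (n i : ℝ) ^ u i)⁻¹ ≤
      (N : ℝ) ^ (Fintype.card ι - 1 - ∑ i, u i) * (∏ i ∈ univ.erase j, (n i : ℝ))⁻¹ := by
  have hn1 : ∀ i, (1 : ℝ) ≤ n i := fun i => by exact_mod_cast (mem_Icc.1 (hn i)).1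
  have h := prod_le_pow_mul_prod_pow (univ.erase j) (g := fun i => (n i : ℝ)) (N := N)
    (fun i _ => by positivity) (fun i _ => by exact_mod_cast (mem_Icc.1 (hn i)).2)
    fun i _ => hu i
  rw [card_erase_of_mem (mem_univ j), card_univ, sum_erase _ hj,
    prod_erase _ (f := fun i => (n i : ℝ) ^ u i) (by rw [hj, pow_zero])] at h
  rw [← div_eq_mul_inv, le_div_iff₀ (prod_pos fun i _ => zero_lt_one.trans_le (hn1 i)),
    inv_mul_le_iff₀ (prod_pos fun i _ => pow_pos (zero_lt_one.trans_le (hn1 i)) _), mul_comm]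
  exact h

noncomputable def squarefreeBox (ι : Type*) [Fintype ι] [DecidableEq ι] (M : ℕ) :
    Finset (ι → ℕ) :=
  {t ∈ Fintype.piFinset fun _ => Icc 1 M | ∀ i, Squarefree (t i)}

section SharedPart

variable {ι : Type*} [Fintype ι] [DecidableEq ι]

noncomputable def sharedPart (t : ι → ℕ) (S : Finset ι) : ℕ :=
  ∏ p ∈ (∏ i, t i).primeFactors with ({i | p ∣ t i} : Finset ι) = S, p

lemma prod_sharedPart_filter (t : ι → ℕ) (P : Finset ι → Prop) [DecidablePred P] :
    ∏ S with P S, sharedPart t S = ∏ p ∈ (∏ i, t i).primeFactors with P {i | p ∣ t i}, p := by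
  rw [← prod_fiberwise_of_maps_to (g := fun p => ({i | p ∣ t i} : Finset ι))
    (t := {S | P S}) (fun p hp => by simpa using (mem_filter.1 hp).2)]
  refine prod_congr rfl fun S hS => ?_
  rw [sharedPart, filter_filter]
  refine prod_congr (filter_congr fun p _ => ?_) fun _ _ => rfl
  constructor
  · rintro rfl
    exact ⟨(mem_filter.1 hS).2, rfl⟩
  · exact And.right

variable {t : ι → ℕ}

lemma lcm_eq_prod_sharedPart (ht : ∀ i, Squarefree (t i)) (A : Finset ι) :
    A.lcm t = ∏ S with ∃ i ∈ S, i ∈ A, sharedPart t S := by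
  have hprod : ∏ i, t i ≠ 0 := prod_ne_zero_iff.2 fun i _ => (ht i).ne_zero
  rw [prod_sharedPart_filter]
  refine Nat.dvd_antisymm (Finset.lcm_dvd fun i hi => ?_) (prod_primes_dvd _ ?_ ?_)
  · conv_lhs => rw [← Nat.prod_primeFactors_of_squarefree (ht i)]
    refine prod_dvd_prod_of_subset _ _ _ fun p hp => ?_
    have hp' := Nat.mem_primeFactors.1 hp
    simp only [mem_filter, Nat.mem_primeFactors, mem_univ, true_and]
    exact ⟨⟨hp'.1, hp'.2.1.trans (dvd_prod_of_mem t (mem_univ i)), hprod⟩, i, hp'.2.1, hi⟩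
  · intro p hp
    exact (Nat.prime_of_mem_primeFactors (mem_filter.1 hp).1).prime
  · intro p hp
    simp only [mem_filter, mem_univ, true_and] at hp
    obtain ⟨-, i, hpi, hi⟩ := hp
    exact hpi.trans (dvd_lcm hi)

lemma eq_prod_sharedPart (ht : ∀ i, Squarefree (t i)) (i : ι) :
    t i = ∏ S with i ∈ S, sharedPart t S := by
  simpa using lcm_eq_prod_sharedPart ht {i}

lemma sharedPart_dvd (ht : ∀ i, Squarefree (t i)) {S : Finset ι} {i : ι} (hi : i ∈ S) :
    sharedPart t S ∣ t i := by
  rw [eq_prod_sharedPart ht i]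
  exact dvd_prod_of_mem _ (mem_filter.2 ⟨mem_univ S, hi⟩)

lemma sharedPart_empty (t : ι → ℕ) : sharedPart t ∅ = 1 := by
  refine prod_eq_one fun p hp => absurd (mem_filter.1 hp).2 ?_
  have hp := Nat.mem_primeFactors.1 (mem_filter.1 hp).1
  obtain ⟨i, -, hpi⟩ := (Prime.dvd_finsetProd_iff hp.1.prime t).1 hp.2.1
  exact ne_empty_of_mem (mem_filter.2 ⟨mem_univ i, hpi⟩)

lemma sharedPart_pos (t : ι → ℕ) (S : Finset ι) : 0 < sharedPart t S :=
  prod_pos fun _ hp => (Nat.prime_of_mem_primeFactors (mem_filter.1 hp).1).pos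

lemma sharedPart_injOn : Set.InjOn (sharedPart (ι := ι)) {t | ∀ i, Squarefree (t i)} :=
  fun t ht t' ht' h => funext fun i => by
    rw [eq_prod_sharedPart ht, eq_prod_sharedPart ht', h]

lemma sum_squarefreeBox_prod_inv_sharedPart_pow_le (N : ℕ) (e : Finset ι → ℕ) :
    ∑ t ∈ squarefreeBox ι N, ∏ S, ((sharedPart t S : ℝ) ^ e S)⁻¹ ≤
      ∏ S, ∑ x ∈ (if S = ∅ then {1} else Icc 1 N), ((x : ℝ) ^ e S)⁻¹ := by
  have hmaps : ∀ t ∈ squarefreeBox ι N, sharedPart t ∈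
      Fintype.piFinset fun S : Finset ι => if S = ∅ then {1} else Icc 1 N := by
    intro t ht
    obtain ⟨htN, ht⟩ := mem_filter.1 ht
    refine Fintype.mem_piFinset.2 fun S => ?_
    split_ifs with hS
    · rw [hS, sharedPart_empty, mem_singleton]
    · obtain ⟨i, hi⟩ := nonempty_iff_ne_empty.2 hS
      exact mem_Icc.2 ⟨sharedPart_pos t S, (Nat.le_of_dvd (ht i).ne_zero.bot_lt
        (sharedPart_dvd ht hi)).trans (mem_Icc.1 (Fintype.mem_piFinset.1 htN i)).2⟩
  rw [prod_univ_sum, ← sum_image (s := squarefreeBox ι N)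
    (f := fun m => ∏ S, ((m S : ℝ) ^ e S)⁻¹)
    (sharedPart_injOn.mono fun t ht => (mem_filter.1 ht).2)]
  refine sum_le_sum_of_subset_of_nonneg ?_ fun _ _ _ => by positivity
  intro m hm
  obtain ⟨t, ht, rfl⟩ := mem_image.1 hm
  exact hmaps t ht

end SharedPart

section Cover

variable {ι : Type*} [DecidableEq ι] (Q : Finset (Finset ι))

noncomputable def coverLcm (t : Q → ℕ) (i : ι) : ℕ :=
  ({T : Q | i ∈ (T : Finset ι)} : Finset Q).lcm t

variable {Q}

lemma coverLcm_dvd_iff {t : Q → ℕ} {i : ι} {m : ℕ} :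
    coverLcm Q t i ∣ m ↔ ∀ T : Q, i ∈ (T : Finset ι) → t T ∣ m := by
  simp [coverLcm, Finset.lcm_dvd_iff]

end Cover

section CoverCount

variable {ι : Type*} [Fintype ι] [DecidableEq ι] {Q : Finset (Finset ι)}

variable (Q) in
def coveredExcept (j : ι) (S : Finset Q) : Finset ι :=
  {i ∈ univ.erase j | ∃ T ∈ S, i ∈ (T : Finset ι)}

lemma prod_erase_coverLcm {t : Q → ℕ} (ht : ∀ T, Squarefree (t T)) (j : ι) :
    ∏ i ∈ univ.erase j, coverLcm Q t i = ∏ S, sharedPart t S ^ #(coveredExcept Q j S) := by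
  have hcover : ∀ i, coverLcm Q t i =
      ∏ S : Finset Q with ∃ T : Q, T ∈ S ∧ i ∈ (T : Finset ι), sharedPart t S := fun i => by
    rw [coverLcm, lcm_eq_prod_sharedPart ht]
    simp only [mem_filter, mem_univ, true_and]
  simp_rw [hcover, prod_filter]
  rw [Finset.prod_comm]
  refine prod_congr rfl fun S _ => ?_
  rw [← prod_filter, prod_const, coveredExcept]

lemma coveredExcept_nonempty (hQ : ∀ T ∈ Q, 2 ≤ #T) (j : ι) {S : Finset Q} (hS : S.Nonempty) :
    (coveredExcept Q j S).Nonempty := by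
  obtain ⟨T, hT⟩ := hS
  obtain ⟨i, hi, hij⟩ := exists_mem_ne (hQ T T.2) j
  exact ⟨i, mem_filter.2 ⟨mem_erase.2 ⟨hij, mem_univ i⟩, T, hT, hi⟩⟩

lemma card_coveredExcept_eq_one_le (hQ : ∀ T ∈ Q, 2 ≤ #T) (j : ι) :
    #{S : Finset Q | S.Nonempty ∧ #(coveredExcept Q j S) = 1} ≤ Fintype.card ι - 1 := by
  -- such an `S` consists of the single set `{i, j}`, where `{i} = coveredExcept Q j S`
  have hT : ∀ S : Finset Q, #(coveredExcept Q j S) = 1 → ∀ T ∈ S,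
      (T : Finset ι) = insert j (coveredExcept Q j S) := by
    intro S hS T hTS
    refine eq_of_subset_of_card_le (fun i hi => ?_) ?_
    · rcases eq_or_ne i j with rfl | hij
      · exact mem_insert_self _ _
      · exact mem_insert_of_mem (mem_filter.2 ⟨mem_erase.2 ⟨hij, mem_univ i⟩, T, hTS, hi⟩)
    · exact (card_insert_le _ _).trans (by rw [hS]; exact hQ T T.2)
  have hsub : ∀ S₁ ∈ ({S : Finset Q | S.Nonempty ∧ #(coveredExcept Q j S) = 1} : Finset _),
      ∀ S₂ ∈ ({S : Finset Q | S.Nonempty ∧ #(coveredExcept Q j S) = 1} : Finset _),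
      coveredExcept Q j S₁ = coveredExcept Q j S₂ → S₁ ⊆ S₂ := by
    intro S₁ h₁ S₂ h₂ hW T hT₁
    obtain ⟨-, hS₁⟩ := (mem_filter.1 h₁).2
    obtain ⟨⟨T₂, hT₂⟩, hS₂⟩ := (mem_filter.1 h₂).2
    have : T = T₂ := Subtype.ext (by rw [hT S₁ hS₁ T hT₁, hT S₂ hS₂ T₂ hT₂, hW])
    exact this ▸ hT₂
  calc #{S : Finset Q | S.Nonempty ∧ #(coveredExcept Q j S) = 1}
      ≤ #((univ.erase j).powersetCard 1) := by
        refine card_le_card_of_injOn (coveredExcept Q j) (fun S hS => ?_)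
          fun S₁ h₁ S₂ h₂ hW => (hsub S₁ h₁ S₂ h₂ hW).antisymm (hsub S₂ h₂ S₁ h₁ hW.symm)
        exact mem_powersetCard.2 ⟨filter_subset _ _, (mem_filter.1 hS).2.2⟩
    _ = Fintype.card ι - 1 := by
        rw [card_powersetCard, card_erase_of_mem (mem_univ j), card_univ, Nat.choose_one_right]

lemma prod_sum_inv_pow_card_coveredExcept_le (hQ : ∀ T ∈ Q, 2 ≤ #T) (j : ι) (N : ℕ) :
    ∏ S : Finset Q, ∑ x ∈ (if S = ∅ then {1} else Icc 1 N), ((x : ℝ) ^ #(coveredExcept Q j S))⁻¹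
      ≤ 2 ^ 2 ^ #Q * (1 + Real.log N) ^ (Fintype.card ι - 1) := by
  set X := 1 + Real.log N
  have hX : 1 ≤ X := by linarith [Real.log_natCast_nonneg N]
  have hfactor : ∀ S : Finset Q,
      ∑ x ∈ (if S = ∅ then {1} else Icc 1 N), ((x : ℝ) ^ #(coveredExcept Q j S))⁻¹ ≤
        2 * X ^ (if S.Nonempty ∧ #(coveredExcept Q j S) = 1 then 1 else 0) := by
    intro S
    rcases S.eq_empty_or_nonempty with rfl | hS
    · norm_num
    have hW := (coveredExcept_nonempty hQ j hS).card_pos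
    rw [if_neg hS.ne_empty]
    split_ifs with h
    · simp only [h.2, pow_one]
      linarith [sum_Icc_inv_le_one_add_log N]
    · have hW2 : 2 ≤ #(coveredExcept Q j S) := by
        have : #(coveredExcept Q j S) ≠ 1 := fun h1 => h ⟨hS, h1⟩
        omega
      linarith [sum_Icc_inv_pow_le_two N hW2]
  calc _ ≤ ∏ S : Finset Q, 2 * X ^ (if S.Nonempty ∧ #(coveredExcept Q j S) = 1 then 1 else 0) :=
        prod_le_prod (fun _ _ => sum_nonneg fun _ _ => by positivity) fun S _ => hfactor S
    _ = 2 ^ 2 ^ #Q * X ^ #{S : Finset Q | S.Nonempty ∧ #(coveredExcept Q j S) = 1} := by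
        rw [prod_mul_distrib, prod_const, card_univ, Fintype.card_finset, Fintype.card_coe,
          prod_pow_eq_pow_sum, sum_boole, Nat.cast_id]
    _ ≤ 2 ^ 2 ^ #Q * X ^ (Fintype.card ι - 1) := by
        gcongr
        exact card_coveredExcept_eq_one_le hQ j

lemma sum_squarefreeBox_prod_inv_coverLcm_le (hQ : ∀ T ∈ Q, 2 ≤ #T) (j : ι) (N : ℕ) :
    ∑ t ∈ squarefreeBox Q N, (∏ i ∈ univ.erase j, (coverLcm Q t i : ℝ))⁻¹
      ≤ 2 ^ 2 ^ #Q * (1 + Real.log N) ^ (Fintype.card ι - 1) := by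
  calc _ = ∑ t ∈ squarefreeBox Q N, ∏ S, ((sharedPart t S : ℝ) ^ #(coveredExcept Q j S))⁻¹ := by
        refine sum_congr rfl fun t ht => ?_
        rw [prod_inv_distrib]
        exact_mod_cast congrArg (fun m : ℕ => (m : ℝ)⁻¹)
          (prod_erase_coverLcm (mem_filter.1 ht).2 j)
    _ ≤ _ := sum_squarefreeBox_prod_inv_sharedPart_pow_le N _
    _ ≤ _ := prod_sum_inv_pow_card_coveredExcept_le hQ j N

end CoverCount

section HFun

variable {k : ℕ} {Q : Finset (Finset (Fin k))}

lemma ite_forall_gcd_eq_one_eq_sum (hQ : ∀ T ∈ Q, T.Nonempty) {M : ℕ} {d : Fin k → ℕ}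
    (hd : ∀ i, d i ∈ Icc 1 M) :
    (if ∀ T ∈ Q, T.gcd d = 1 then 1 else 0) =
      ∑ t ∈ Fintype.piFinset (fun _ : Q => Icc 1 M),
        (∏ T, μ (t T)) * if ∀ i, coverLcm Q t i ∣ d i then 1 else 0 := by
  calc (if ∀ T ∈ Q, T.gcd d = 1 then 1 else 0)
      = ∏ T : Q, if (T : Finset (Fin k)).gcd d = 1 then (1 : ℤ) else 0 := by
        rw [prod_coe_sort Q fun T => if T.gcd d = 1 then (1 : ℤ) else 0]
        convert prod_boole.symm
    _ = ∏ T : Q, ∑ a ∈ Icc 1 M, if ∀ i ∈ (T : Finset (Fin k)), a ∣ d i then μ a else 0 :=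
        prod_congr rfl fun T _ => by
          convert ite_gcd_eq_one_eq_sum_moebius (hQ T T.2) fun i _ => hd i
    _ = ∑ t ∈ Fintype.piFinset (fun _ : Q => Icc 1 M),
          ∏ T : Q, if ∀ i ∈ (T : Finset (Fin k)), t T ∣ d i then μ (t T) else 0 :=
        prod_univ_sum _ _
    _ = _ := by
        refine sum_congr rfl fun t _ => ?_
        simp only [Fintype.prod_ite_zero, coverLcm_dvd_iff, mul_boole]
        exact if_congr ⟨fun h i T hi => h T i hi, fun h T i hi => h i T hi⟩ rfl rfl

theorem hFun_eq_sum (hQ : ∀ T ∈ Q, T.Nonempty) {M : ℕ} {n : Fin k → ℕ} (hn : ∀ i, n i ∈ Icc 1 M) :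
    hFun k Q n = ∑ t ∈ Fintype.piFinset (fun _ : Q => Icc 1 M),
      (∏ T, μ (t T)) * if n = coverLcm Q t then 1 else 0 := by
  have hn0 : ∀ i, n i ≠ 0 := fun i => by have := (mem_Icc.1 (hn i)).1; omega
  have hdM : ∀ d ∈ Fintype.piFinset (fun i => (n i).divisors), ∀ i, d i ∈ Icc 1 M := by
    intro d hd i
    have hdi := Fintype.mem_piFinset.1 hd i
    exact mem_Icc.2 ⟨Nat.pos_of_mem_divisors hdi,
      (Nat.divisor_le hdi).trans (mem_Icc.1 (hn i)).2⟩
  calc hFun k Q n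
      = ∑ d ∈ Fintype.piFinset (fun i => (n i).divisors),
          ∑ t ∈ Fintype.piFinset (fun _ : Q => Icc 1 M),
          (∏ T, μ (t T)) * ∏ i, (if coverLcm Q t i ∣ d i then μ (n i / d i) else 0) := by
        refine sum_congr rfl fun d hd => ?_
        rw [ite_forall_gcd_eq_one_eq_sum hQ (hdM d hd), mul_sum]
        refine sum_congr rfl fun t _ => ?_
        simp only [Fintype.prod_ite_zero, mul_ite, mul_zero]
        split_ifs <;> ring
    _ = _ := by
        rw [sum_comm]
        refine sum_congr rfl fun t _ => ?_
        rw [← mul_sum, sum_piFinset_divisors_prod_ite_dvd_moebius_div hn0]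

lemma abs_hFun_le (hQ : ∀ T ∈ Q, T.Nonempty) {M : ℕ} {n : Fin k → ℕ} (hn : ∀ i, n i ∈ Icc 1 M) :
    |hFun k Q n| ≤ ∑ t ∈ squarefreeBox Q M, if n = coverLcm Q t then 1 else 0 := by
  rw [hFun_eq_sum hQ hn, squarefreeBox, sum_filter]
  refine (abs_sum_le_sum_abs _ _).trans (sum_le_sum fun t _ => ?_)
  have hind : 0 ≤ if n = coverLcm Q t then (1 : ℤ) else 0 := by split_ifs <;> norm_num
  rw [abs_mul, abs_prod, abs_of_nonneg hind]
  by_cases hsf : ∀ T, Squarefree (t T)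
  · rw [if_pos hsf]
    exact mul_le_of_le_one_left hind
      (prod_le_one (fun _ _ => abs_nonneg _) fun _ _ => abs_moebius_le_one)
  · obtain ⟨T, hT⟩ := not_forall.1 hsf
    rw [if_neg hsf, prod_eq_zero (mem_univ T) (by rw [moebius_eq_zero_of_not_squarefree hT,
      abs_zero]), zero_mul]

lemma sum_abs_hFun_mul_le (hQ : ∀ T ∈ Q, T.Nonempty) (M : ℕ) {v : (Fin k → ℕ) → ℝ}
    (hv : ∀ n, 0 ≤ v n) :
    ∑ n ∈ Fintype.piFinset (fun _ => Icc 1 M), |(hFun k Q n : ℝ)| * v n ≤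
      ∑ t ∈ squarefreeBox Q M, v (coverLcm Q t) := by
  calc ∑ n ∈ Fintype.piFinset (fun _ => Icc 1 M), |(hFun k Q n : ℝ)| * v n
      ≤ ∑ n ∈ Fintype.piFinset (fun _ => Icc 1 M),
          (∑ t ∈ squarefreeBox Q M, if n = coverLcm Q t then (1 : ℝ) else 0) * v n := by
        refine sum_le_sum fun n hn => mul_le_mul_of_nonneg_right ?_ (hv n)
        exact_mod_cast abs_hFun_le hQ (Fintype.mem_piFinset.1 hn)
    _ = ∑ t ∈ squarefreeBox Q M, ∑ n ∈ Fintype.piFinset (fun _ => Icc 1 M),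
          if n = coverLcm Q t then v n else 0 := by
        simp only [sum_mul, boole_mul]
        exact sum_comm
    _ ≤ ∑ t ∈ squarefreeBox Q M, v (coverLcm Q t) := by
        refine sum_le_sum fun t _ => ?_
        rw [sum_ite_eq']
        split_ifs
        exacts [le_rfl, hv _]

lemma sum_abs_hFun_div_le (hQ : ∀ T ∈ Q, 2 ≤ #T) {u : Fin k → ℕ} (hu : ∀ i, u i ≤ 1)
    {j : Fin k} (hj : u j = 0) (N : ℕ) :
    ∑ n ∈ Fintype.piFinset (fun _ : Fin k => Icc 1 N), |(hFun k Q n : ℝ)| / ∏ i, (n i : ℝ) ^ u i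
      ≤ (N : ℝ) ^ (k - 1 - ∑ i, u i) * (2 ^ 2 ^ #Q * (1 + Real.log N) ^ (k - 1)) := by
  have hQne : ∀ T ∈ Q, T.Nonempty := fun T hT => card_pos.1 (by linarith [hQ T hT])
  calc _ ≤ ∑ n ∈ Fintype.piFinset (fun _ : Fin k => Icc 1 N), (N : ℝ) ^ (k - 1 - ∑ i, u i) *
          (|(hFun k Q n : ℝ)| * (∏ i ∈ univ.erase j, (n i : ℝ))⁻¹) := by
        refine sum_le_sum fun n hn => ?_
        rw [div_eq_mul_inv, mul_left_comm]
        have h := inv_prod_pow_le hu hj (Fintype.mem_piFinset.1 hn)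
        rw [Fintype.card_fin] at h
        exact mul_le_mul_of_nonneg_left h (abs_nonneg _)
    _ ≤ (N : ℝ) ^ (k - 1 - ∑ i, u i) *
          ∑ t ∈ squarefreeBox Q N, (∏ i ∈ univ.erase j, (coverLcm Q t i : ℝ))⁻¹ := by
        rw [← mul_sum]
        gcongr
        exact sum_abs_hFun_mul_le hQne N fun n => by positivity
    _ ≤ _ := by
        gcongr
        simpa using sum_squarefreeBox_prod_inv_coverLcm_le hQ j N

end HFun

theorem stmt_16_general (k : ℕ)
    (Q : Finset (Finset (Fin k))) (hQ : ∀ T ∈ Q, 2 ≤ T.card)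
    (u : Fin k → ℕ) (hu : ∀ i, u i ≤ 1) (husum : ∑ i, u i < k) :
    (fun x : ℝ => x ^ (∑ i, u i) *
        ∑ d ∈ Fintype.piFinset fun _ : Fin k => Finset.Icc 1 ⌊x⌋₊,
          |(hFun k Q d : ℝ)| / ∏ i, (d i : ℝ) ^ (u i))
      =O[atTop] fun x : ℝ => x ^ (k - 1) * (Real.log x) ^ (k - 1) := by
  obtain ⟨j, -, hj⟩ : ∃ j ∈ univ, u j < 1 :=
    exists_lt_of_sum_lt (by simpa using husum)
  refine IsBigO.of_bound (2 ^ 2 ^ #Q * 2 ^ (k - 1)) ?_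
  filter_upwards [eventually_ge_atTop (Real.exp 1)] with x hx
  have hx1 : 1 ≤ x := (Real.one_le_exp zero_le_one).trans hx
  have hlog : 1 ≤ Real.log x := (Real.le_log_iff_exp_le (by linarith)).2 hx
  have hN : (⌊x⌋₊ : ℝ) ≤ x := Nat.floor_le (by linarith)
  have hN1 : (1 : ℝ) ≤ ⌊x⌋₊ := by exact_mod_cast (Nat.one_le_floor_iff x).2 hx1
  have hlogN : 1 + Real.log ⌊x⌋₊ ≤ 2 * Real.log x := by
    linarith [Real.log_le_log (by linarith) hN]
  rw [Real.norm_of_nonneg (by positivity), Real.norm_of_nonneg (by positivity)]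
  calc _ ≤ x ^ (∑ i, u i) * ((⌊x⌋₊ : ℝ) ^ (k - 1 - ∑ i, u i) *
          (2 ^ 2 ^ #Q * (1 + Real.log ⌊x⌋₊) ^ (k - 1))) := by
        gcongr
        exact sum_abs_hFun_div_le hQ hu (Nat.lt_one_iff.1 hj) _
    _ ≤ x ^ (∑ i, u i) * (x ^ (k - 1 - ∑ i, u i) * (2 ^ 2 ^ #Q * (2 * Real.log x) ^ (k - 1))) := by
        have : 0 ≤ 1 + Real.log ⌊x⌋₊ := by linarith [Real.log_natCast_nonneg ⌊x⌋₊]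
        gcongr
    _ = _ := by
        rw [mul_pow, ← mul_assoc, pow_mul_pow_sub x (by omega)]
        ring

/-- error bound: for any `u ∈ {0,1}^k` with `∑ u_i < k`,
`x^{∑ u_i} ∑_{d_1,…,d_k ≤ x} |h(d)| / (d_1^{u_1} ⋯ d_k^{u_k})
  ≪ x^{k-1} (log x)^{k-1}`. -/
theorem stmt_16 (k : ℕ) (hk : 2 ≤ k)
    (Q : Finset (Finset (Fin k))) (hQ : ∀ T ∈ Q, 2 ≤ T.card)
    (u : Fin k → ℕ) (hu : ∀ i, u i ≤ 1) (husum : ∑ i, u i < k) :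
    (fun x : ℝ => x ^ (∑ i, u i) *
        ∑ d ∈ Fintype.piFinset fun _ : Fin k => Finset.Icc 1 ⌊x⌋₊,
          |(hFun k Q d : ℝ)| / ∏ i, (d i : ℝ) ^ (u i))
      =O[atTop] fun x : ℝ => x ^ (k - 1) * (Real.log x) ^ (k - 1) :=
  stmt_16_general k Q hQ u hu husum
end
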